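/- Let G be a 2-connected signed graph with a 2-separation (G₁, G₂), V(G₁) ∩ V(G₂) = {u, v}, and e₁, e₂ ∈ E(G₁). If every edge of G₂ is positive, then e₁ and e₂ are tied in G if and only if they are tied in G₁⁺, where G₁⁺ is G₁ with a positive edge uv added. -/

import Mathlib

/-- A finite loopless signed multigraph. -/
structure SGraph : Type 1 where
  V : Type
  E : Type
  [fintV : Fintype V]
  [decV : DecidableEq V]
  [fintE : Fintype E]
  [decE : DecidableEq E]
  ends : E → Sym2 V
  loopless : ∀ e, ¬ (ends e).IsDiag
  sgn : E → ℤˣ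

attribute [instance] SGraph.fintV SGraph.decV SGraph.fintE SGraph.decE

namespace SGraph

variable (G : SGraph)

/-- Degree of a vertex in an edge set. -/
noncomputable def deg (S : Set G.E) (v : G.V) : ℕ := {e ∈ S | v ∈ G.ends e}.ncard

/-- The sign of an edge set: the product of the signs of its edges. -/
noncomputable def signOf (S : Set G.E) : ℤˣ := ∏ᶠ e ∈ S, G.sgn e

/-- An edge set is connected: any two of its edges are linked by a chain of
edges of the set, consecutive ones sharing a vertex. -/
def conn (S : Set G.E) : Prop :=
  ∀ e ∈ S, ∀ f ∈ S,
    Relation.ReflTransGen (fun a b => a ∈ S ∧ b ∈ S ∧ ∃ v, v ∈ G.ends a ∧ v ∈ G.ends b) e f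

/-- An edge set is (the edge set of) a cycle: nonempty, every vertex has degree 0 or 2,
and it is connected. -/
def IsCycle (S : Set G.E) : Prop :=
  S.Nonempty ∧ (∀ v, G.deg S v = 0 ∨ G.deg S v = 2) ∧ G.conn S

/-- The vertices covered by an edge set. -/
def verts (S : Set G.E) : Set G.V := {v | ∃ e ∈ S, v ∈ G.ends e}

/-- Two edges are untied: there are cycles of both signs through both edges. -/
def Untied (e₁ e₂ : G.E) : Prop :=
  (∃ C, G.IsCycle C ∧ e₁ ∈ C ∧ e₂ ∈ C ∧ G.signOf C = 1) ∧
  (∃ C, G.IsCycle C ∧ e₁ ∈ C ∧ e₂ ∈ C ∧ G.signOf C = -1)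

/-- Two edges are tied: all cycles through both have the same sign. -/
def Tied (e₁ e₂ : G.E) : Prop :=
  ∀ C C', G.IsCycle C → G.IsCycle C' → e₁ ∈ C → e₂ ∈ C → e₁ ∈ C' → e₂ ∈ C' →
    G.signOf C = G.signOf C'

/-- A signed graph is balanced if every cycle is positive. -/
def Balanced : Prop := ∀ C, G.IsCycle C → G.signOf C = 1

/-- Reachability between vertices avoiding a forbidden vertex set `S`. -/
def ReachOutside (S : Set G.V) : G.V → G.V → Prop :=
  Relation.ReflTransGen (fun a b => a ∉ S ∧ b ∉ S ∧ ∃ e, G.ends e = s(a, b))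

/-- The graph minus the vertex set `S` is connected. -/
def ConnOutside (S : Set G.V) : Prop :=
  ∀ u v : G.V, u ∉ S → v ∉ S → G.ReachOutside S u v

/-- `k`-connectivity: more than `k` vertices, and removing fewer than `k` vertices
leaves a connected graph. -/
def KConnected (k : ℕ) : Prop :=
  k + 1 ≤ Fintype.card G.V ∧ ∀ S : Set G.V, S.ncard < k → G.ConnOutside S

/-- `P` is the edge set of a path from `a` to `b` (possibly trivial when `a = b`). -/
def IsPath (P : Set G.E) (a b : G.V) : Prop :=
  (a = b ∧ P = ∅) ∨
  (a ≠ b ∧ P.Nonempty ∧ G.deg P a = 1 ∧ G.deg P b = 1 ∧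
    (∀ v, v ≠ a → v ≠ b → G.deg P v = 0 ∨ G.deg P v = 2) ∧ G.conn P)

/-- The vertices of a path from `a` to `b`, including its ends. -/
def pverts (P : Set G.E) (a b : G.V) : Set G.V := G.verts P ∪ {a, b}

/-- An edge set is an edge-cut `δ(X)`. -/
def EdgeCut (S : Set G.E) : Prop :=
  ∃ X : Set G.V, ∀ e, e ∈ S ↔ ∃ a b, G.ends e = s(a, b) ∧ a ∈ X ∧ b ∉ X

/-- A signed graph is simple if no two distinct edges are parallel. -/
def Simple : Prop := ∀ e f : G.E, G.ends e = G.ends f → e = f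

end SGraph

namespace SGraph

/-- The signed graph obtained from the edges `E₁` of `G` by adding one extra edge
between `u` and `v` of sign `σ`. -/
def plus1 (G : SGraph) (E₁ : Finset G.E) {u v : G.V} (huv : u ≠ v) (σ : ℤˣ) : SGraph where
  V := G.V
  E := {e : G.E // e ∈ E₁} ⊕ Unit
  ends := Sum.elim (fun e => G.ends e.1) (fun _ => s(u, v))
  loopless := by
    rintro (e | e)
    · exact G.loopless e.1
    · simpa [Sym2.mk_isDiag_iff] using huv
  sgn := Sum.elim (fun e => G.sgn e.1) (fun _ => σ)

/-- The signed graph obtained from the edges `E₁` of `G` by adding two extra parallel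
edges between `u` and `v`, one positive and one negative. -/
def plus2 (G : SGraph) (E₁ : Finset G.E) {u v : G.V} (huv : u ≠ v) : SGraph where
  V := G.V
  E := {e : G.E // e ∈ E₁} ⊕ Bool
  ends := Sum.elim (fun e => G.ends e.1) (fun _ => s(u, v))
  loopless := by
    rintro (e | e)
    · exact G.loopless e.1
    · simpa [Sym2.mk_isDiag_iff] using huv
  sgn := Sum.elim (fun e => G.sgn e.1) (fun b => if b then 1 else -1)

end SGraph

/-!
Cycles of `G` through an edge of `G₁` correspond to cycles of `G₁⁺` of the same sign, and
the correspondence keeps the edges of `G₁`. A cycle of `G` that uses edges of `G₂` crosses the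
2-separation exactly at `u` and at `v`, so its part in `G₂` is a positive `u`–`v` path, which can
be replaced by the positive edge `uv`. Conversely, the edge `uv` of a cycle of `G₁⁺` is replaced
by a `u`–`v` path inside `G₂`, which exists because `G` is 2-connected.
-/

namespace SGraph

open Set Relation

variable {G H : SGraph} {E₁ E₂ : Finset G.E} {u v : G.V} {huv : u ≠ v} {σ : ℤˣ}

lemma exists_ends_eq_mk (e : G.E) : ∃ a b, a ≠ b ∧ G.ends e = s(a, b) := by
  induction h : G.ends e using Sym2.ind with
  | _ a b =>
    exact ⟨a, b, fun hab => G.loopless e (by rw [h, hab]; exact Sym2.mk_isDiag_iff.mpr rfl), rfl⟩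

lemma exists_ends_eq (e : G.E) {a : G.V} (ha : a ∈ G.ends e) :
    ∃ b, a ≠ b ∧ G.ends e = s(a, b) := by
  obtain ⟨b, hb⟩ := Sym2.mem_iff_exists.mp ha
  exact ⟨b, fun hab => G.loopless e (by rw [hb, hab]; exact Sym2.mk_isDiag_iff.mpr rfl), hb⟩

lemma exists_mem_ends_of_deg_ne_zero {S : Set G.E} {w : G.V} (h : G.deg S w ≠ 0) :
    ∃ e ∈ S, w ∈ G.ends e := by
  rw [deg] at h
  obtain ⟨e, he, hw⟩ := nonempty_of_ncard_ne_zero h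
  exact ⟨e, he, hw⟩

lemma deg_ne_zero_of_mem {S : Set G.E} {w : G.V} {e : G.E} (he : e ∈ S)
    (hw : w ∈ G.ends e) : G.deg S w ≠ 0 := by
  rw [deg]
  exact ((ncard_pos (s := {x ∈ S | w ∈ G.ends x})).mpr ⟨e, he, hw⟩).ne'

lemma deg_eq_zero_of_notMem_verts {S : Set G.E} {w : G.V} (h : w ∉ G.verts S) :
    G.deg S w = 0 := by
  rw [deg, ncard_eq_zero]
  exact eq_empty_of_forall_notMem fun e ⟨he, hw⟩ => h ⟨e, he, hw⟩

lemma deg_union {A B : Set G.E} (hAB : Disjoint A B) (w : G.V) :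
    G.deg (A ∪ B) w = G.deg A w + G.deg B w := by
  rw [deg, deg, deg, show {e ∈ A ∪ B | w ∈ G.ends e} = _ from sep_union]
  exact ncard_union_eq (hAB.mono (sep_subset _ _) (sep_subset _ _))

lemma deg_insert {S : Set G.E} {e : G.E} (he : e ∉ S) (w : G.V) :
    G.deg (insert e S) w = G.deg S w + if w ∈ G.ends e then 1 else 0 := by
  unfold deg
  split_ifs with hw
  · rw [show {x ∈ insert e S | w ∈ G.ends x} = insert e {x ∈ S | w ∈ G.ends x} by
      ext x; by_cases hx : x = e <;> simp [hx, hw]]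
    exact ncard_insert_of_notMem fun h => he h.1
  · rw [show {x ∈ insert e S | w ∈ G.ends x} = {x ∈ S | w ∈ G.ends x} by
      ext x; by_cases hx : x = e <;> simp [hx, hw], add_zero]

lemma sum_deg (S : Set G.E) : ∑ w, G.deg S w = 2 * S.ncard := by
  classical
  have hdeg (w : G.V) : G.deg S w = ∑ e ∈ S.toFinset, if w ∈ G.ends e then 1 else 0 := by
    rw [Finset.sum_boole, deg, ← ncard_coe_finset]
    congr 1
    ext e
    simp
  have hends (e : G.E) : (∑ w : G.V, if w ∈ G.ends e then 1 else 0) = 2 := by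
    obtain ⟨a, b, hab, he⟩ := exists_ends_eq_mk e
    have hfilter : Finset.univ.filter (· ∈ s(a, b)) = {a, b} := by ext; simp
    rw [Finset.sum_boole, he, hfilter, Finset.card_pair hab, Nat.cast_ofNat]
  simp_rw [hdeg]
  rw [Finset.sum_comm, Finset.sum_congr rfl fun e _ => hends e, Finset.sum_const,
    ncard_eq_toFinset_card', smul_eq_mul, mul_comm]

lemma even_deg_add_deg {S : Set G.E} (huv : u ≠ v)
    (h : ∀ w, w ≠ u → w ≠ v → Even (G.deg S w)) : Even (G.deg S u + G.deg S v) := by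
  have hsum := sum_deg S
  rw [← Finset.sum_add_sum_compl {u, v}, Finset.sum_pair huv] at hsum
  have hrest : Even (∑ w ∈ {u, v}ᶜ, G.deg S w) := Finset.even_sum _ fun w hw => by
    simp only [Finset.mem_compl, Finset.mem_insert, Finset.mem_singleton, not_or] at hw
    exact h w hw.1 hw.2
  exact (Nat.even_add.mp (hsum ▸ even_two_mul _)).mpr hrest

lemma signOf_union {A B : Set G.E} (hAB : Disjoint A B) :
    G.signOf (A ∪ B) = G.signOf A * G.signOf B :=
  finprod_mem_union hAB (toFinite _) (toFinite _)

lemma signOf_eq_one {A : Set G.E} (h : ∀ e ∈ A, G.sgn e = 1) : G.signOf A = 1 :=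
  finprod_mem_of_eqOn_one h

def EdgeAdj (G : SGraph) (S : Set G.E) (a b : G.E) : Prop :=
  a ∈ S ∧ b ∈ S ∧ ∃ w, w ∈ G.ends a ∧ w ∈ G.ends b

lemma EdgeAdj.symm {S : Set G.E} {a b : G.E} (h : G.EdgeAdj S a b) : G.EdgeAdj S b a :=
  ⟨h.2.1, h.1, h.2.2.imp fun _ hw => hw.symm⟩

lemma EdgeAdj.mono {S T : Set G.E} (hST : S ⊆ T) {a b : G.E} (h : G.EdgeAdj S a b) :
    G.EdgeAdj T a b :=
  ⟨hST h.1, hST h.2.1, h.2.2⟩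

instance (S : Set G.E) : Std.Symm (G.EdgeAdj S) := ⟨fun _ _ => EdgeAdj.symm⟩

lemma reflTransGen_edgeAdj_mono {S T : Set G.E} (hST : S ⊆ T) {a b : G.E}
    (h : ReflTransGen (G.EdgeAdj S) a b) : ReflTransGen (G.EdgeAdj T) a b :=
  ReflTransGen.mono (fun _ _ => EdgeAdj.mono hST) _ _ h

lemma conn_of_map {S : Set H.E} {T : Set G.E} (hS : H.conn S) (f : H.E → G.E)
    (hf : ∀ a b, H.EdgeAdj S a b → ReflTransGen (G.EdgeAdj T) (f a) (f b))
    (hT : ∀ t ∈ T, ∃ s ∈ S, ReflTransGen (G.EdgeAdj T) (f s) t) : G.conn T := by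
  intro t ht t' ht'
  obtain ⟨s, hs, hst⟩ := hT t ht
  obtain ⟨s', hs', hst'⟩ := hT t' ht'
  exact (symm_of _ hst).trans ((ReflTransGen.lift' f hf s s' (hS s hs s' hs')).trans hst')

lemma conn_insert {S : Set G.E} {e : G.E} (hS : G.conn S)
    (he : S.Nonempty → ∃ f ∈ S, ∃ w, w ∈ G.ends f ∧ w ∈ G.ends e) : G.conn (insert e S) := by
  rcases S.eq_empty_or_nonempty with rfl | hne
  · intro a ha b hb
    rw [insert_empty_eq, mem_singleton_iff] at ha hb
    rw [ha, hb]
  obtain ⟨f, hf, hfe⟩ := he hne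
  refine conn_of_map (H := G) hS id (fun a b h => .single (h.mono (subset_insert e S))) ?_
  rintro t (rfl | ht)
  · exact ⟨f, hf, .single ⟨mem_insert_of_mem _ hf, mem_insert _ _, hfe⟩⟩
  · exact ⟨t, ht, .refl⟩

lemma conn.exists_edgeAdj_mem_notMem {S A : Set G.E} (hS : G.conn S) {a b : G.E}
    (ha : a ∈ S) (haA : a ∈ A) (hb : b ∈ S) (hbA : b ∉ A) :
    ∃ p ∈ A, ∃ q ∉ A, G.EdgeAdj S p q := by
  induction hS a ha b hb using ReflTransGen.head_induction_on with
  | refl => exact absurd haA hbA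
  | @head a c hac _ ih =>
    by_cases hcA : c ∈ A
    · exact ih hac.2.1 hcA
    · exact ⟨a, haA, c, hcA, hac⟩

lemma IsPath.symm {P : Set G.E} {a b : G.V} (h : G.IsPath P a b) : G.IsPath P b a := by
  rcases h with ⟨rfl, rfl⟩ | ⟨hab, hne, ha, hb, hmid, hconn⟩
  · exact Or.inl ⟨rfl, rfl⟩
  · exact Or.inr ⟨hab.symm, hne, hb, ha, fun w hwb hwa => hmid w hwa hwb, hconn⟩

lemma IsPath.cons {P : Set G.E} {a b c : G.V} {e : G.E} (hP : G.IsPath P c b)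
    (he : G.ends e = s(a, c)) (ha : a ∉ G.verts P) (hab : a ≠ b) :
    G.IsPath (insert e P) a b := by
  have heP : e ∉ P := fun h => ha ⟨e, h, by simp [he]⟩
  have hdeg (w : G.V) : G.deg (insert e P) w = G.deg P w + if w = a ∨ w = c then 1 else 0 := by
    simp [deg_insert heP, he]
  have hac : a ≠ c := fun h => G.loopless e (by rw [he, h]; exact Sym2.mk_isDiag_iff.mpr rfl)
  have hPa : G.deg P a = 0 := deg_eq_zero_of_notMem_verts ha
  rcases hP with ⟨rfl, rfl⟩ | ⟨hcb, -, hc, hb, hmid, hconn⟩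
  · have hempty (w : G.V) : G.deg ∅ w = 0 := by simp [deg]
    refine Or.inr ⟨hab, insert_nonempty _ _, ?_, ?_, fun w hwa hwb => ?_,
      conn_insert (fun _ h => h.elim) fun h => absurd h not_nonempty_empty⟩
    all_goals rw [hdeg, hempty]; simp [*]
  · have hbe : b ≠ a ∧ b ≠ c := ⟨hab.symm, hcb.symm⟩
    refine Or.inr ⟨hab, insert_nonempty _ _, ?_, ?_, fun w hwa hwb => ?_, conn_insert hconn ?_⟩
    · simp [hdeg, hPa]
    · simp [hdeg, hb, hbe]
    · by_cases hwc : w = c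
      · simp [hdeg, hwc, hc]
      · simpa [hdeg, hwa, hwc] using hmid w hwc hwb
    · intro _
      obtain ⟨f, hf, hcf⟩ := exists_mem_ends_of_deg_ne_zero (hc ▸ one_ne_zero : G.deg P c ≠ 0)
      exact ⟨f, hf, c, hcf, by simp [he]⟩

def Reach (G : SGraph) (S : Set G.E) : G.V → G.V → Prop :=
  ReflTransGen fun a b => ∃ e ∈ S, G.ends e = s(a, b)

lemma Reach.exists_edge_reach {S : Set G.E} {a b : G.V} (h : G.Reach S a b) (hab : a ≠ b) :
    ∃ e ∈ S, ∃ x, G.ends e = s(a, x) ∧ G.Reach {f ∈ S | a ∉ G.ends f} x b := by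
  induction h with
  | refl => exact absurd rfl hab
  | @tail m c _ hmc ih =>
    obtain ⟨e, heS, he⟩ := hmc
    by_cases hma : m = a
    · subst hma
      exact ⟨e, heS, c, he, .refl⟩
    · obtain ⟨e', he'S, x, he', hx⟩ := ih (Ne.symm hma)
      refine ⟨e', he'S, x, he', hx.tail ⟨e, ⟨heS, ?_⟩, he⟩⟩
      simp [he, Ne.symm hma, hab]

lemma exists_isPath_of_reach {S : Set G.E} {a b : G.V} (h : G.Reach S a b) :
    ∃ P ⊆ S, G.IsPath P a b := by
  induction hn : S.ncard using Nat.strong_induction_on generalizing S a with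
  | _ n ih =>
    by_cases hab : a = b
    · exact ⟨∅, empty_subset S, Or.inl ⟨hab, rfl⟩⟩
    obtain ⟨e, heS, x, he, hx⟩ := h.exists_edge_reach hab
    have hlt : {f ∈ S | a ∉ G.ends f}.ncard < n := hn ▸ ncard_lt_ncard
      ((ssubset_iff_of_subset (sep_subset _ _)).mpr ⟨e, heS, fun h' => h'.2 (by simp [he])⟩)
    obtain ⟨P, hPS, hP⟩ := ih _ hlt hx rfl
    refine ⟨insert e P, insert_subset heS (hPS.trans (sep_subset _ _)), hP.cons he ?_ hab⟩
    rintro ⟨f, hf, haf⟩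
    exact (hPS hf).2 haf

/-- The 2-separation `(G₁, G₂)` is given by the edge sets `E₁ = E(G₁)` and `E₂ = E(G₂)`. -/
structure IsTwoSep (G : SGraph) (E₁ E₂ : Finset G.E) (u v : G.V) : Prop where
  disjoint : Disjoint E₁ E₂
  union_eq_univ : E₁ ∪ E₂ = Finset.univ
  verts_inter : G.verts ↑E₁ ∩ G.verts ↑E₂ = {u, v}

namespace IsTwoSep

lemma mem_or_mem (hs : G.IsTwoSep E₁ E₂ u v) (e : G.E) : e ∈ E₁ ∨ e ∈ E₂ :=
  Finset.mem_union.mp (hs.union_eq_univ ▸ Finset.mem_univ e)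

lemma eq_or_eq_of_mem_ends (hs : G.IsTwoSep E₁ E₂ u v) {p q : G.E} {w : G.V} (hp : p ∈ E₁)
    (hq : q ∈ E₂) (hwp : w ∈ G.ends p) (hwq : w ∈ G.ends q) : w = u ∨ w = v := by
  have hw : w ∈ G.verts ↑E₁ ∩ G.verts ↑E₂ := ⟨⟨p, hp, hwp⟩, ⟨q, hq, hwq⟩⟩
  rwa [hs.verts_inter, mem_insert_iff, mem_singleton_iff] at hw

lemma disjoint_of_subset (hs : G.IsTwoSep E₁ E₂ u v) {A B : Set G.E} (hA : A ⊆ ↑E₁)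
    (hB : B ⊆ ↑E₂) : Disjoint A B :=
  (Finset.disjoint_coe.mpr hs.disjoint).mono hA hB

lemma deg_eq_zero_or (hs : G.IsTwoSep E₁ E₂ u v) {A B : Set G.E} (hA : A ⊆ ↑E₁)
    (hB : B ⊆ ↑E₂) {w : G.V} (hwu : w ≠ u) (hwv : w ≠ v) : G.deg A w = 0 ∨ G.deg B w = 0 := by
  by_contra! h
  obtain ⟨p, hp, hwp⟩ := exists_mem_ends_of_deg_ne_zero h.1
  obtain ⟨q, hq, hwq⟩ := exists_mem_ends_of_deg_ne_zero h.2
  rcases hs.eq_or_eq_of_mem_ends (hA hp) (hB hq) hwp hwq with rfl | rfl <;> contradiction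

lemma inter_union_inter (hs : G.IsTwoSep E₁ E₂ u v) (C : Set G.E) : C ∩ ↑E₁ ∪ C ∩ ↑E₂ = C := by
  rw [← inter_union_distrib_left, ← Finset.coe_union, hs.union_eq_univ, Finset.coe_univ,
    inter_univ]

lemma deg_eq_add (hs : G.IsTwoSep E₁ E₂ u v) (C : Set G.E) (w : G.V) :
    G.deg C w = G.deg (C ∩ ↑E₁) w + G.deg (C ∩ ↑E₂) w := by
  conv_lhs => rw [← hs.inter_union_inter C]
  exact deg_union (hs.disjoint_of_subset inter_subset_right inter_subset_right) w

lemma signOf_eq (hs : G.IsTwoSep E₁ E₂ u v) (hpos : ∀ e ∈ E₂, G.sgn e = 1) (C : Set G.E) :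
    G.signOf C = G.signOf (C ∩ ↑E₁) := by
  conv_lhs => rw [← hs.inter_union_inter C]
  rw [signOf_union (hs.disjoint_of_subset inter_subset_right inter_subset_right),
    signOf_eq_one (A := C ∩ ↑E₂) fun e he => hpos e he.2, mul_one]

/-- A walk in `G - u` from a neighbour of `u` in `G₂` can only leave `G₂` through `v`. -/
lemma reach (hs : G.IsTwoSep E₁ E₂ u v) (h2 : G.KConnected 2) (huv : u ≠ v) :
    G.Reach ↑E₂ u v := by
  obtain ⟨f, hf, huf⟩ : u ∈ G.verts ↑E₂ := (hs.verts_inter ▸ mem_insert u {v} :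
    u ∈ G.verts ↑E₁ ∩ G.verts ↑E₂).2
  obtain ⟨w, huw, hfw⟩ := exists_ends_eq f huf
  have hwv : G.ReachOutside {u} w v :=
    h2.2 {u} (by simp) w v (by simpa using huw.symm) (by simpa using huv.symm)
  suffices ∀ x, G.ReachOutside {u} w x → (G.Reach ↑E₂ u x ∧ x ∈ G.verts ↑E₂) ∨ G.Reach ↑E₂ u v
    from (this v hwv).elim And.left id
  intro x hx
  induction hx with
  | refl => exact Or.inl ⟨.single ⟨f, hf, hfw⟩, f, hf, by simp [hfw]⟩
  | @tail m x _ hmx ih =>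
    obtain ⟨hm, -, e, he⟩ := hmx
    rcases ih with ⟨hum, q, hq, hmq⟩ | h
    · rcases hs.mem_or_mem e with he₁ | he₂
      · rcases hs.eq_or_eq_of_mem_ends he₁ hq (by simp [he]) hmq with rfl | rfl
        · exact absurd rfl hm
        · exact Or.inr hum
      · exact Or.inl ⟨hum.tail ⟨e, he₂, he⟩, e, he₂, by simp [he]⟩
    · exact Or.inr h

lemma deg_inter_eq_one (hs : G.IsTwoSep E₁ E₂ u v) (huv : u ≠ v) {C : Set G.E}
    (hC : G.IsCycle C) (h₁ : (C ∩ ↑E₁).Nonempty) (h₂ : (C ∩ ↑E₂).Nonempty) :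
    G.deg (C ∩ ↑E₁) u = 1 ∧ G.deg (C ∩ ↑E₁) v = 1 := by
  obtain ⟨-, hdeg, hconn⟩ := hC
  obtain ⟨a, haC, ha⟩ := h₁
  obtain ⟨b, hbC, hb⟩ := h₂
  obtain ⟨p, hp, q, hq, hpC, hqC, w, hwp, hwq⟩ := hconn.exists_edgeAdj_mem_notMem (A := ↑E₁)
    haC ha hbC fun hb₁ => Finset.disjoint_left.mp hs.disjoint hb₁ hb
  have hq₂ : q ∈ E₂ := (hs.mem_or_mem q).resolve_left hq
  have hw₁ := deg_ne_zero_of_mem (S := C ∩ ↑E₁) ⟨hpC, hp⟩ hwp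
  have hw₂ := deg_ne_zero_of_mem (S := C ∩ ↑E₂) ⟨hqC, hq₂⟩ hwq
  have hpar : Even (G.deg (C ∩ ↑E₂) u + G.deg (C ∩ ↑E₂) v) := by
    refine even_deg_add_deg huv fun x hxu hxv => ?_
    have hx := hs.deg_eq_add C x
    rw [Nat.even_iff]
    rcases hs.deg_eq_zero_or (A := C ∩ ↑E₁) (B := C ∩ ↑E₂) inter_subset_right inter_subset_right
      hxu hxv with h | h <;>
      rcases hdeg x with h' | h' <;> omega
  obtain ⟨k, hk⟩ := hpar
  -- it crosses at `u` or `v` with one edge on each side; parity forces the same at the other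
  have hcross : (G.deg (C ∩ ↑E₁) u ≠ 0 ∧ G.deg (C ∩ ↑E₂) u ≠ 0) ∨
      (G.deg (C ∩ ↑E₁) v ≠ 0 ∧ G.deg (C ∩ ↑E₂) v ≠ 0) := by
    rcases hs.eq_or_eq_of_mem_ends hp hq₂ hwp hwq with h | h
    exacts [Or.inl (h ▸ ⟨hw₁, hw₂⟩), Or.inr (h ▸ ⟨hw₁, hw₂⟩)]
  have hu := hs.deg_eq_add C u
  have hv := hs.deg_eq_add C v
  rcases hdeg u with h' | h' <;> rcases hdeg v with h'' | h'' <;> omega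

end IsTwoSep

/-- Contracting `G₂` onto the new edge `uv`: edges of `E₁` are kept, all others become `uv`. -/
def toPlus1 (e : G.E) : (G.plus1 E₁ huv σ).E :=
  if h : e ∈ E₁ then .inl ⟨e, h⟩ else .inr ()

lemma toPlus1_of_mem {e : G.E} (h : e ∈ E₁) :
    (toPlus1 e : (G.plus1 E₁ huv σ).E) = .inl ⟨e, h⟩ :=
  dif_pos h

lemma toPlus1_of_notMem {e : G.E} (h : e ∉ E₁) :
    (toPlus1 e : (G.plus1 E₁ huv σ).E) = .inr () :=
  dif_neg h

lemma ends_toPlus1_of_mem {e : G.E} (h : e ∈ E₁) :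
    (G.plus1 E₁ huv σ).ends (toPlus1 e) = G.ends e := by
  rw [toPlus1_of_mem h]
  rfl

lemma ends_toPlus1_of_notMem {e : G.E} (h : e ∉ E₁) :
    (G.plus1 E₁ huv σ).ends (toPlus1 e) = s(u, v) := by
  rw [toPlus1_of_notMem h]
  rfl

lemma sgn_toPlus1_of_mem {e : G.E} (h : e ∈ E₁) :
    (G.plus1 E₁ huv σ).sgn (toPlus1 e) = G.sgn e := by
  rw [toPlus1_of_mem h]
  rfl

lemma sgn_toPlus1_of_notMem {e : G.E} (h : e ∉ E₁) :
    (G.plus1 E₁ huv σ).sgn (toPlus1 e) = σ := by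
  rw [toPlus1_of_notMem h]
  rfl

lemma eq_of_toPlus1_eq {a b : G.E} (ha : a ∈ E₁)
    (h : (toPlus1 a : (G.plus1 E₁ huv σ).E) = toPlus1 b) : a = b := by
  by_cases hb : b ∈ E₁
  · rw [toPlus1_of_mem ha, toPlus1_of_mem hb] at h
    exact congrArg Subtype.val (Sum.inl_injective h)
  · rw [toPlus1_of_mem ha, toPlus1_of_notMem hb] at h
    exact absurd h Sum.inl_ne_inr

lemma mem_of_toPlus1_mem_image {e : G.E} (he : e ∈ E₁) {C : Set G.E}
    (h : (toPlus1 e : (G.plus1 E₁ huv σ).E) ∈ toPlus1 '' C) : e ∈ C := by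
  obtain ⟨c, hc, hce⟩ := h
  exact eq_of_toPlus1_eq he hce.symm ▸ hc

lemma toPlus1_eq_or_eq {p : G.E} (hp : p ∉ E₁) (x : (G.plus1 E₁ huv σ).E) :
    (∃ e ∈ E₁, x = toPlus1 e) ∨ x = toPlus1 p := by
  rcases x with y | ⟨⟩
  · exact Or.inl ⟨y.1, y.2, (toPlus1_of_mem y.2).symm⟩
  · exact Or.inr (toPlus1_of_notMem hp).symm

lemma exists_eq_image_toPlus1 {P : Set G.E} {p : G.E} (hp : p ∈ P) (hP : Disjoint P ↑E₁)
    (D : Set (G.plus1 E₁ huv σ).E) :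
    ∃ A ⊆ (↑E₁ : Set G.E), D = toPlus1 '' A ∨ D = toPlus1 '' (A ∪ P) := by
  have hp₁ : p ∉ E₁ := disjoint_left.mp hP hp
  refine ⟨{e ∈ (↑E₁ : Set G.E) | toPlus1 e ∈ D}, sep_subset _ _, ?_⟩
  by_cases hpD : toPlus1 p ∈ D
  · right
    ext x
    rcases toPlus1_eq_or_eq hp₁ x with ⟨e, he, rfl⟩ | rfl
    · refine ⟨fun h => mem_image_of_mem _ (Or.inl ⟨he, h⟩), fun h => ?_⟩
      rcases mem_of_toPlus1_mem_image he h with h' | h'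
      exacts [h'.2, absurd he (disjoint_left.mp hP h')]
    · exact iff_of_true hpD (mem_image_of_mem _ (Or.inr hp))
  · left
    ext x
    rcases toPlus1_eq_or_eq hp₁ x with ⟨e, he, rfl⟩ | rfl
    · exact ⟨fun h => mem_image_of_mem _ ⟨he, h⟩, fun h => (mem_of_toPlus1_mem_image he h).2⟩
    · exact iff_of_false hpD fun ⟨c, hc, hcp⟩ => hp₁ (eq_of_toPlus1_eq hc.1 hcp ▸ hc.1)

lemma deg_image_toPlus1_of_subset {A : Set G.E} (hA : A ⊆ ↑E₁) (w : G.V) :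
    (G.plus1 E₁ huv σ).deg (toPlus1 '' A) w = G.deg A w := by
  have himage : {x ∈ (toPlus1 '' A : Set (G.plus1 E₁ huv σ).E) |
      w ∈ (G.plus1 E₁ huv σ).ends x} = toPlus1 '' {e ∈ A | w ∈ G.ends e} := by
    ext x
    constructor
    · rintro ⟨⟨e, he, rfl⟩, hw⟩
      exact ⟨e, ⟨he, ends_toPlus1_of_mem (hA he) ▸ hw⟩, rfl⟩
    · rintro ⟨e, ⟨he, hw⟩, rfl⟩
      exact ⟨mem_image_of_mem _ he, (ends_toPlus1_of_mem (hA he)).symm ▸ hw⟩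
  unfold deg
  erw [himage, InjOn.ncard_image fun a ha b _ => eq_of_toPlus1_eq (hA ha.1)]

lemma signOf_image_toPlus1_of_subset {A : Set G.E} (hA : A ⊆ ↑E₁) :
    (G.plus1 E₁ huv σ).signOf (toPlus1 '' A) = G.signOf A := by
  unfold signOf
  rw [finprod_mem_image fun a ha b _ => eq_of_toPlus1_eq (hA ha)]
  exact finprod_mem_congr rfl fun e he => sgn_toPlus1_of_mem (hA he)

lemma image_toPlus1_eq_singleton {B : Set G.E} (hB : Disjoint B ↑E₁) {b : G.E} (hb : b ∈ B) :
    (toPlus1 '' B : Set (G.plus1 E₁ huv σ).E) = {toPlus1 b} := by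
  have hB' (e : G.E) (he : e ∈ B) : e ∉ E₁ := disjoint_left.mp hB he
  refine (image_subset_iff.mpr fun e he => ?_).antisymm (singleton_subset_iff.mpr ⟨b, hb, rfl⟩)
  rw [mem_preimage, toPlus1_of_notMem (hB' e he), toPlus1_of_notMem (hB' b hb)]
  rfl

lemma disjoint_image_toPlus1 {A B : Set G.E} (hA : A ⊆ ↑E₁) (hB : Disjoint B ↑E₁) :
    Disjoint (toPlus1 '' A : Set (G.plus1 E₁ huv σ).E) (toPlus1 '' B) := by
  refine disjoint_left.mpr ?_
  rintro _ ⟨a, ha, rfl⟩ ⟨b, hb, hab⟩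
  exact disjoint_left.mp hB hb (eq_of_toPlus1_eq (hA ha) hab.symm ▸ hA ha)

lemma deg_image_toPlus1_union {A B : Set G.E} (hA : A ⊆ ↑E₁) (hB : Disjoint B ↑E₁) {b : G.E}
    (hb : b ∈ B) (w : G.V) :
    (G.plus1 E₁ huv σ).deg (toPlus1 '' (A ∪ B)) w =
      G.deg A w + if w = u ∨ w = v then 1 else 0 := by
  have hbA : (toPlus1 b : (G.plus1 E₁ huv σ).E) ∉ toPlus1 '' A :=
    disjoint_right.mp (disjoint_image_toPlus1 hA hB) (mem_image_of_mem _ hb)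
  rw [image_union, image_toPlus1_eq_singleton hB hb, union_singleton]
  erw [deg_insert hbA,
    deg_image_toPlus1_of_subset hA, ends_toPlus1_of_notMem (disjoint_left.mp hB hb)]
  congr 1
  split_ifs with h₁ h₂ h₂
  · rfl
  · exact absurd (Sym2.mem_iff.mp h₁) h₂
  · exact absurd (Sym2.mem_iff.mpr h₂) h₁
  · rfl

def ofPlus1 (d : G.E) (x : (G.plus1 E₁ huv σ).E) : G.E :=
  Sum.elim Subtype.val (fun _ => d) x

lemma ofPlus1_toPlus1_of_mem (d : G.E) {e : G.E} (h : e ∈ E₁) :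
    ofPlus1 d (toPlus1 e : (G.plus1 E₁ huv σ).E) = e := by
  rw [toPlus1_of_mem h]
  rfl

lemma ofPlus1_toPlus1_of_notMem (d : G.E) {e : G.E} (h : e ∉ E₁) :
    ofPlus1 d (toPlus1 e : (G.plus1 E₁ huv σ).E) = d := by
  rw [toPlus1_of_notMem h]
  rfl

lemma conn_image_toPlus1_iff {A : Set G.E} (hA : A ⊆ ↑E₁) :
    (G.plus1 E₁ huv σ).conn (toPlus1 '' A) ↔ G.conn A := by
  constructor
  · intro h e he f hf
    refine conn_of_map h (ofPlus1 e) ?_ ?_ e he f hf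
    · rintro _ _ ⟨⟨a, ha, rfl⟩, ⟨b, hb, rfl⟩, w, hwa, hwb⟩
      rw [ofPlus1_toPlus1_of_mem e (hA ha), ofPlus1_toPlus1_of_mem e (hA hb)]
      exact .single ⟨ha, hb, w, ends_toPlus1_of_mem (hA ha) ▸ hwa,
        ends_toPlus1_of_mem (hA hb) ▸ hwb⟩
    · refine fun t ht => ⟨toPlus1 t, mem_image_of_mem _ ht, ?_⟩
      rw [ofPlus1_toPlus1_of_mem e (hA ht)]
  · intro h
    refine conn_of_map h toPlus1 (fun a b ⟨ha, hb, w, hwa, hwb⟩ => .single ?_) ?_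
    · exact ⟨mem_image_of_mem _ ha, mem_image_of_mem _ hb, w,
        (ends_toPlus1_of_mem (hA ha)).symm ▸ hwa, (ends_toPlus1_of_mem (hA hb)).symm ▸ hwb⟩
    · rintro _ ⟨a, ha, rfl⟩
      exact ⟨a, ha, .refl⟩

lemma isCycle_image_toPlus1_iff {A : Set G.E} (hA : A ⊆ ↑E₁) :
    (G.plus1 E₁ huv σ).IsCycle (toPlus1 '' A) ↔ G.IsCycle A := by
  unfold IsCycle
  rw [image_nonempty, conn_image_toPlus1_iff hA]
  refine and_congr_right' (and_congr_left' (forall_congr' fun w => ?_))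
  erw [deg_image_toPlus1_of_subset hA]

namespace IsTwoSep

lemma mem_ends_toPlus1 (hs : G.IsTwoSep E₁ E₂ u v) {a b : G.E} {w : G.V}
    (hwa : w ∈ G.ends a) (hwb : w ∈ G.ends b) (h : a ∈ E₁ ∨ b ∈ E₁) :
    w ∈ (G.plus1 E₁ huv σ).ends (toPlus1 a) := by
  by_cases ha : a ∈ E₁
  · rwa [ends_toPlus1_of_mem ha]
  · rw [ends_toPlus1_of_notMem ha]
    exact Sym2.mem_iff.mpr <| hs.eq_or_eq_of_mem_ends (h.resolve_left ha)
      ((hs.mem_or_mem a).resolve_left ha) hwb hwa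

lemma isCycle_image_toPlus1 (hs : G.IsTwoSep E₁ E₂ u v) {C : Set G.E} (hC : G.IsCycle C)
    (h₁ : (C ∩ ↑E₁).Nonempty) : (G.plus1 E₁ huv σ).IsCycle (toPlus1 '' C) := by
  by_cases h₂ : (C ∩ ↑E₂).Nonempty
  swap
  · have hC₁ : C ⊆ ↑E₁ := fun e he =>
      (hs.mem_or_mem e).resolve_right fun he₂ => h₂ ⟨e, he, he₂⟩
    exact (isCycle_image_toPlus1_iff hC₁).mpr hC
  obtain ⟨hu, hv⟩ := hs.deg_inter_eq_one huv hC h₁ h₂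
  obtain ⟨b, hb⟩ := h₂
  have hdisj₂ : Disjoint (C ∩ ↑E₂) ↑E₁ :=
    (hs.disjoint_of_subset (subset_refl _) inter_subset_right).symm
  obtain ⟨-, hdeg, hconn⟩ := hC
  refine ⟨(h₁.image _).mono (image_mono inter_subset_left), fun (w : G.V) => ?_, ?_⟩
  · have hw := hs.deg_eq_add C w
    erw [← hs.inter_union_inter C, deg_image_toPlus1_union inter_subset_right hdisj₂ hb]
    by_cases huvw : w = u ∨ w = v
    · rw [if_pos huvw]
      rcases huvw with rfl | rfl <;> omega
    · rw [if_neg huvw]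
      simp only [not_or] at huvw
      rcases hs.deg_eq_zero_or (A := C ∩ ↑E₁) (B := C ∩ ↑E₂) inter_subset_right
        inter_subset_right huvw.1 huvw.2 with h | h <;> rcases hdeg w with h' | h' <;> omega
  · refine conn_of_map hconn toPlus1 (fun a b ⟨ha, hb, w, hwa, hwb⟩ => ?_) ?_
    · by_cases hab : a ∈ E₁ ∨ b ∈ E₁
      · exact .single ⟨mem_image_of_mem _ ha, mem_image_of_mem _ hb, w,
          hs.mem_ends_toPlus1 hwa hwb hab, hs.mem_ends_toPlus1 hwb hwa hab.symm⟩
      · simp only [not_or] at hab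
        rw [toPlus1_of_notMem hab.1, toPlus1_of_notMem hab.2]
        exact .refl
    · rintro _ ⟨a, ha, rfl⟩
      exact ⟨a, ha, .refl⟩

lemma conn_union_of_conn_image_toPlus1 (hs : G.IsTwoSep E₁ E₂ u v) {A P : Set G.E}
    (hA : A ⊆ ↑E₁) (hP : P ⊆ ↑E₂) (hPuv : G.IsPath P u v)
    (hD : (G.plus1 E₁ huv σ).conn (toPlus1 '' (A ∪ P))) : G.conn (A ∪ P) := by
  rcases hPuv with ⟨h, -⟩ | ⟨-, ⟨p, hp⟩, hPu, hPv, -, hPconn⟩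
  · exact absurd h huv
  obtain ⟨pu, hpu, hupu⟩ := exists_mem_ends_of_deg_ne_zero (hPu ▸ one_ne_zero : G.deg P u ≠ 0)
  obtain ⟨pv, hpv, hvpv⟩ := exists_mem_ends_of_deg_ne_zero (hPv ▸ one_ne_zero : G.deg P v ≠ 0)
  have hPreach {a b : G.E} (ha : a ∈ P) (hb : b ∈ P) :
      ReflTransGen (G.EdgeAdj (A ∪ P)) a b :=
    reflTransGen_edgeAdj_mono subset_union_right (hPconn a ha b hb)
  -- the new edge `uv` is sent to `pu`, which is joined along `P` to both ends of the new edge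
  have hlocal : ∀ x ∈ (toPlus1 '' (A ∪ P) : Set (G.plus1 E₁ huv σ).E), ∀ w : G.V,
      w ∈ (G.plus1 E₁ huv σ).ends x →
      ∃ c ∈ A ∪ P, w ∈ G.ends c ∧ ReflTransGen (G.EdgeAdj (A ∪ P)) (ofPlus1 pu x) c := by
    rintro _ ⟨c, hc, rfl⟩ w hw
    by_cases hc₁ : c ∈ E₁
    · rw [ofPlus1_toPlus1_of_mem pu hc₁]
      exact ⟨c, hc, ends_toPlus1_of_mem hc₁ ▸ hw, .refl⟩
    · rw [ofPlus1_toPlus1_of_notMem pu hc₁]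
      rw [ends_toPlus1_of_notMem hc₁] at hw
      rcases Sym2.mem_iff.mp hw with h | h
      · exact ⟨pu, Or.inr hpu, h ▸ hupu, .refl⟩
      · exact ⟨pv, Or.inr hpv, h ▸ hvpv, hPreach hpu hpv⟩
  refine conn_of_map hD (ofPlus1 pu) (fun x y ⟨hx, hy, w, hwx, hwy⟩ => ?_) ?_
  · obtain ⟨c, hc, hwc, hxc⟩ := hlocal x hx w hwx
    obtain ⟨c', hc', hwc', hyc'⟩ := hlocal y hy w hwy
    exact hxc.trans (.head ⟨hc, hc', w, hwc, hwc'⟩ (symm_of _ hyc'))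
  · rintro t (ht | ht)
    · refine ⟨toPlus1 t, mem_image_of_mem _ (Or.inl ht), ?_⟩
      rw [ofPlus1_toPlus1_of_mem pu (hA ht)]
    · refine ⟨toPlus1 p, mem_image_of_mem _ (Or.inr hp), ?_⟩
      rw [ofPlus1_toPlus1_of_notMem pu
        (disjoint_left.mp (hs.disjoint_of_subset (subset_refl _) hP).symm hp)]
      exact hPreach hpu ht

lemma isCycle_of_isCycle_image_toPlus1 (hs : G.IsTwoSep E₁ E₂ u v) {A P : Set G.E}
    (hA : A ⊆ ↑E₁) (hP : P ⊆ ↑E₂) (hPuv : G.IsPath P u v)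
    (hD : (G.plus1 E₁ huv σ).IsCycle (toPlus1 '' (A ∪ P))) : G.IsCycle (A ∪ P) := by
  obtain ⟨-, hdeg, hconn⟩ := hD
  have hconn' := hs.conn_union_of_conn_image_toPlus1 hA hP hPuv hconn
  rcases hPuv with ⟨h, -⟩ | ⟨-, ⟨p, hp⟩, hPu, hPv, hPmid, -⟩
  · exact absurd h huv
  refine ⟨⟨p, Or.inr hp⟩, fun w => ?_, hconn'⟩
  have hDw := hdeg w
  erw [deg_image_toPlus1_union hA (hs.disjoint_of_subset (subset_refl _) hP).symm hp] at hDw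
  rw [deg_union (hs.disjoint_of_subset hA hP)]
  by_cases huvw : w = u ∨ w = v
  · rw [if_pos huvw] at hDw
    rcases huvw with rfl | rfl <;> omega
  · rw [if_neg huvw] at hDw
    simp only [not_or] at huvw
    have := hPmid w huvw.1 huvw.2
    rcases hs.deg_eq_zero_or hA hP huvw.1 huvw.2 with h | h <;> omega

lemma exists_isCycle_image_eq (hs : G.IsTwoSep E₁ E₂ u v) {P : Set G.E} (hP : P ⊆ ↑E₂)
    (hPuv : G.IsPath P u v) {D : Set (G.plus1 E₁ huv σ).E}
    (hD : (G.plus1 E₁ huv σ).IsCycle D) : ∃ C, G.IsCycle C ∧ D = toPlus1 '' C := by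
  obtain ⟨p, hp⟩ : P.Nonempty := by
    rcases hPuv with ⟨h, -⟩ | ⟨-, hne, -⟩
    exacts [absurd h huv, hne]
  obtain ⟨A, hA, rfl | rfl⟩ :=
    exists_eq_image_toPlus1 hp (hs.disjoint_of_subset (subset_refl _) hP).symm D
  · exact ⟨A, (isCycle_image_toPlus1_iff hA).mp hD, rfl⟩
  · exact ⟨A ∪ P, hs.isCycle_of_isCycle_image_toPlus1 hA hP hPuv hD, rfl⟩

lemma signOf_image_toPlus1 (hs : G.IsTwoSep E₁ E₂ u v) (hpos : ∀ e ∈ E₂, G.sgn e = 1)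
    (C : Set G.E) : (G.plus1 E₁ huv 1).signOf (toPlus1 '' C) = G.signOf C := by
  have hdisj₂ : Disjoint (C ∩ ↑E₂) ↑E₁ :=
    (hs.disjoint_of_subset (subset_refl _) inter_subset_right).symm
  have hone : (G.plus1 E₁ huv 1).signOf (toPlus1 '' (C ∩ ↑E₂)) = 1 :=
    signOf_eq_one fun _ ⟨e, he, hx⟩ => hx ▸ sgn_toPlus1_of_notMem (disjoint_left.mp hdisj₂ he)
  conv_lhs => rw [← hs.inter_union_inter C, image_union]
  rw [signOf_union (disjoint_image_toPlus1 inter_subset_right hdisj₂),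
    signOf_image_toPlus1_of_subset inter_subset_right, hone, mul_one]
  exact (hs.signOf_eq hpos C).symm

end IsTwoSep

end SGraph

/-- Observation 2.1(2): across a 2-separation with `e₁, e₂ ∈ E(G₁)` and all edges of
`G₂` positive, `e₁, e₂` are tied in `G` iff they are tied in `G₁⁺`. -/
theorem stmt_11 (G : SGraph) (h2 : G.KConnected 2)
    (E₁ E₂ : Finset G.E) (hdisj : Disjoint E₁ E₂) (hcover : E₁ ∪ E₂ = Finset.univ)
    (u v : G.V) (huv : u ≠ v)
    (hsep : G.verts ↑E₁ ∩ G.verts ↑E₂ = {u, v})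
    (e₁ e₂ : G.E) (he₁ : e₁ ∈ E₁) (he₂ : e₂ ∈ E₁)
    (hpos : ∀ e ∈ E₂, G.sgn e = 1) :
    G.Tied e₁ e₂ ↔
      (G.plus1 E₁ huv 1).Tied (Sum.inl ⟨e₁, he₁⟩) (Sum.inl ⟨e₂, he₂⟩) := by
  have hs : G.IsTwoSep E₁ E₂ u v := ⟨hdisj, hcover, hsep⟩
  obtain ⟨P, hPE₂, hP⟩ := SGraph.exists_isPath_of_reach (hs.reach h2 huv)
  have hsign := hs.signOf_image_toPlus1 (huv := huv) hpos
  rw [← SGraph.toPlus1_of_mem (huv := huv) (σ := 1) he₁,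
    ← SGraph.toPlus1_of_mem (huv := huv) (σ := 1) he₂]
  constructor
  · intro hT D D' hD hD' h₁ h₂ h₁' h₂'
    obtain ⟨C, hC, rfl⟩ := hs.exists_isCycle_image_eq hPE₂ hP hD
    obtain ⟨C', hC', rfl⟩ := hs.exists_isCycle_image_eq hPE₂ hP hD'
    rw [hsign, hsign]
    exact hT C C' hC hC' (SGraph.mem_of_toPlus1_mem_image he₁ h₁)
      (SGraph.mem_of_toPlus1_mem_image he₂ h₂) (SGraph.mem_of_toPlus1_mem_image he₁ h₁')
      (SGraph.mem_of_toPlus1_mem_image he₂ h₂')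
  · intro hT C C' hC hC' h₁ h₂ h₁' h₂'
    rw [← hsign C, ← hsign C']
    exact hT _ _ (hs.isCycle_image_toPlus1 hC ⟨e₁, h₁, he₁⟩)
      (hs.isCycle_image_toPlus1 hC' ⟨e₁, h₁', he₁⟩) (Set.mem_image_of_mem _ h₁)
      (Set.mem_image_of_mem _ h₂) (Set.mem_image_of_mem _ h₁') (Set.mem_image_of_mem _ h₂')
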